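/- arXiv:1904.07329 — 5 statements merged into one kernel-verified Lean document; each statement's English description precedes it below -/
import Mathlib

section
/- Let L be a positive integer, let R ∈ ℂ^{L×L} be Hermitian, let q ∈ ℂ^L, and define f̄(y) = Re(y† R y − q† y − y† q) for y ∈ ℂ^L. Let x ∈ ℂ^L satisfy |x_l| = 1 for all l, let β ∈ ℝ, set w = 2Rx − 2q, define w̃ ∈ ℂ^L by w̃_l = x_l²·conj(w_l), and set x̄ = x − (β/2)·(w − w̃). Then f̄(x) − f̄(x̄) = (β/4)·Re((w − w̃)† (I − βR) (w − w̃)). -/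
/-!
Since `R` is Hermitian, `f̄` is a real quadratic with gradient `w = 2(Rx − q)`, so moving from
`x` to `x − c d` (`c` real) decreases it by `c Re(d† w) − c² Re(d† R d)`. For `d = w − w̃` and
unimodular `x`, each `conj(d_l)·(w_l + w̃_l)` is purely imaginary, whence
`Re(d† w) = |d|² / 2`, and with `c = β/2` the two terms combine into
`(β/4) Re(d† (I − βR) d)`.
-/

open Matrix

/-- The quadratic cost `f̄(y) = Re(y† R y − q† y − y† q)`. -/
noncomputable def fbar {L : ℕ} (R : Matrix (Fin L) (Fin L) ℂ) (q : Fin L → ℂ)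
    (y : Fin L → ℂ) : ℝ :=
  (star y ⬝ᵥ R.mulVec y - star q ⬝ᵥ y - star y ⬝ᵥ q).re

lemma Complex.two_mul_re_conj_mul_eq_re_conj_mul_self {z : ℂ} (hz : ‖z‖ = 1) (w : ℂ) :
    let e := w - z ^ 2 * (starRingEnd ℂ) w
    2 * ((starRingEnd ℂ) e * w).re = ((starRingEnd ℂ) e * e).re := by
  have hz' : Complex.normSq z = 1 := by
    rw [Complex.normSq_eq_norm_sq, hz, one_pow]
  simp only [Complex.normSq_apply, map_sub, map_mul, Complex.conj_conj, Complex.mul_re,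
    Complex.mul_im, Complex.sub_re, Complex.sub_im, Complex.conj_re, Complex.conj_im,
    pow_two] at hz' ⊢
  linear_combination -(w.re * w.re + w.im * w.im) * (z.re * z.re + z.im * z.im + 1) * hz'

lemma fbar_sub_fbar_sub_smul {L : ℕ} {R : Matrix (Fin L) (Fin L) ℂ} (hR : R.IsHermitian)
    (q x d : Fin L → ℂ) (c : ℝ) :
    fbar R q x - fbar R q (x - (c : ℂ) • d)
      = 2 * c * (star d ⬝ᵥ (R *ᵥ x - q)).re - c ^ 2 * (star d ⬝ᵥ R *ᵥ d).re := by
  have hRd : star x ⬝ᵥ R *ᵥ d = star (star d ⬝ᵥ R *ᵥ x) := by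
    rw [star_dotProduct, star_mulVec, hR.eq, dotProduct_mulVec]
  have hqd : star q ⬝ᵥ d = star (star d ⬝ᵥ q) := star_dotProduct _ _
  simp only [fbar, ← Complex.sub_re, star_sub, star_smul, Complex.star_def, Complex.conj_ofReal,
    mulVec_sub, mulVec_smul, dotProduct_sub, sub_dotProduct, dotProduct_smul, smul_dotProduct,
    smul_eq_mul, hRd, hqd]
  simp only [Complex.sub_re, Complex.mul_re, Complex.ofReal_re, Complex.ofReal_im, Complex.conj_re]
  ring

theorem stmt5_general (L : ℕ) (R : Matrix (Fin L) (Fin L) ℂ)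
    (hR : R.IsHermitian) (q x : Fin L → ℂ)
    (hx : ∀ l, ‖x l‖ = 1) (β : ℝ)
    (w : Fin L → ℂ) (hw : w = fun l => 2 * R.mulVec x l - 2 * q l)
    (wt : Fin L → ℂ) (hwt : ∀ l, wt l = x l ^ 2 * (starRingEnd ℂ) (w l))
    (xb : Fin L → ℂ)
    (hxb : ∀ l, xb l = x l - ((β / 2 : ℝ) : ℂ) * (w l - wt l)) :
    fbar R q x - fbar R q xb
      = (β / 4) *
        (star (w - wt) ⬝ᵥ
          ((1 - (β : ℂ) • R).mulVec (w - wt))).re := by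
  set d := w - wt
  have hxb' : xb = x - ((β / 2 : ℝ) : ℂ) • d := funext hxb
  have hdw : 2 * (star d ⬝ᵥ w).re = (star d ⬝ᵥ d).re := by
    simp only [dotProduct, Complex.re_sum, Finset.mul_sum, Pi.star_apply, Complex.star_def]
    refine Finset.sum_congr rfl fun l _ => ?_
    rw [show d l = w l - x l ^ 2 * (starRingEnd ℂ) (w l) by simp [d, hwt]]
    exact Complex.two_mul_re_conj_mul_eq_re_conj_mul_self (hx l) (w l)
  have hw' : w = (2 : ℝ) • (R *ᵥ x - q) := by
    rw [hw]; ext l; simp [mul_sub]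
  have hId : (star d ⬝ᵥ (1 - (β : ℂ) • R) *ᵥ d).re
      = (star d ⬝ᵥ d).re - β * (star d ⬝ᵥ R *ᵥ d).re := by
    rw [sub_mulVec, one_mulVec, smul_mulVec, dotProduct_sub, dotProduct_smul, smul_eq_mul,
      Complex.sub_re, Complex.re_ofReal_mul]
  rw [hxb', fbar_sub_fbar_sub_smul hR, hId, ← hdw, hw', dotProduct_smul, Complex.smul_re,
    smul_eq_mul]
  ring

/-- With `R` Hermitian, `x ∈ S^L`, `w = 2Rx − 2q`,
`w̃_l = x_l²·conj(w_l)` and `x̄ = x − (β/2)(w − w̃)`, one has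
`f̄(x) − f̄(x̄) = (β/4)·Re((w − w̃)† (I − βR) (w − w̃))`. -/
theorem stmt5 (L : ℕ) (hL : 0 < L) (R : Matrix (Fin L) (Fin L) ℂ)
    (hR : R.IsHermitian) (q x : Fin L → ℂ)
    (hx : ∀ l, ‖x l‖ = 1) (β : ℝ)
    (w : Fin L → ℂ) (hw : w = fun l => 2 * R.mulVec x l - 2 * q l)
    (wt : Fin L → ℂ) (hwt : ∀ l, wt l = x l ^ 2 * (starRingEnd ℂ) (w l))
    (xb : Fin L → ℂ)
    (hxb : ∀ l, xb l = x l - ((β / 2 : ℝ) : ℂ) * (w l - wt l)) :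
    fbar R q x - fbar R q xb
      = (β / 4) *
        (star (w - wt) ⬝ᵥ
          ((1 - (β : ℂ) • R).mulVec (w - wt))).re :=
  stmt5_general L R hR q x hx β w hw wt hwt xb hxb
end

section
/- (Lemma 1) Let L be a positive integer, let P ∈ ℂ^{L×L} be Hermitian positive semidefinite, let q ∈ ℂ^L, let γ ≥ 0, and define f̄(y) = Re(y†(P + γI)y − q†y − y†q). Let x ∈ S^L, let w(x) = 2(P + γI)x − 2q be the gradient of f̄ at x, and set x̄ = x + β·P_x(−w(x)). Let λ_{P+γI} denote the largest eigenvalue of P + γI and assume λ_{P+γI} > 0. If the step size β satisfies 0 < β < 1/λ_{P+γI}, then f̄(x) ≥ f̄(x̄). -/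
/-!
Write `p = P_x(-w)`. Expanding the quadratic cost along the step gives
`f̄(x + βp) = f̄(x) + β Re⟨p, w⟩ + β² Re⟨p, (P + γI) p⟩`. Since `|x_l| = 1`, `P_x` is the orthogonal
projection (for the real inner product `Re⟨·,·⟩`) onto the tangent space, so `Re⟨p, w⟩ = -‖p‖²`,
while the Rayleigh quotient of `P + γI` is at most its largest eigenvalue `λ`. Hence
`f̄(x̄) - f̄(x) ≤ -β ‖p‖² (1 - βλ) ≤ 0`.
-/

open Matrix
open scoped ComplexOrder

/-- Projection onto the tangent space of the complex circle manifold at `z`: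
`(P_z(w))_l = w_l − Re(conj(w_l)·z_l)·z_l`. -/
noncomputable def proj {L : ℕ} (z w : Fin L → ℂ) : Fin L → ℂ :=
  fun l => w l - ((((starRingEnd ℂ) (w l)) * z l).re : ℂ) * z l

namespace Matrix

variable {n 𝕜 : Type*} [Fintype n] [RCLike 𝕜] {A : Matrix n n 𝕜}

theorem re_star_dotProduct_comm (u v : n → 𝕜) :
    RCLike.re (star u ⬝ᵥ v) = RCLike.re (star v ⬝ᵥ u) := by
  rw [star_dotProduct, RCLike.star_def, RCLike.conj_re]

namespace IsHermitian

open scoped MatrixOrder in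
theorem posSemidef_smul_one_sub [DecidableEq n] (hA : A.IsHermitian) {c : ℝ}
    (h : ∀ i, hA.eigenvalues i ≤ c) : ((c : 𝕜) • 1 - A).PosSemidef := by
  have hle : A ≤ algebraMap ℝ (Matrix n n 𝕜) c :=
    le_algebraMap_of_spectrum_le (by
      rw [hA.spectrum_real_eq_range_eigenvalues]
      rintro _ ⟨i, rfl⟩
      exact h i) hA.isSelfAdjoint
  rwa [Matrix.le_iff, Algebra.algebraMap_eq_smul_one, RCLike.real_smul_eq_coe_smul (K := 𝕜)] at hle

theorem re_dotProduct_mulVec_le [DecidableEq n] (hA : A.IsHermitian) {c : ℝ}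
    (h : ∀ i, hA.eigenvalues i ≤ c) (v : n → 𝕜) :
    RCLike.re (star v ⬝ᵥ A *ᵥ v) ≤ c * RCLike.re (star v ⬝ᵥ v) := by
  have := (hA.posSemidef_smul_one_sub h).re_dotProduct_nonneg v
  rw [sub_mulVec, smul_mulVec, one_mulVec, dotProduct_sub, dotProduct_smul, smul_eq_mul,
    map_sub, RCLike.re_ofReal_mul] at this
  linarith

theorem re_star_dotProduct_mulVec_comm (hA : A.IsHermitian) (u v : n → 𝕜) :
    RCLike.re (star u ⬝ᵥ A *ᵥ v) = RCLike.re (star v ⬝ᵥ A *ᵥ u) := by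
  rw [star_dotProduct, star_mulVec, ← dotProduct_mulVec, hA.eq, RCLike.star_def, RCLike.conj_re]

end IsHermitian

end Matrix

theorem fbar_add_smul {L : ℕ} {R : Matrix (Fin L) (Fin L) ℂ} (hR : R.IsHermitian)
    (q x p : Fin L → ℂ) (t : ℝ) :
    fbar R q (x + (t : ℂ) • p) = fbar R q x
      + t * (star p ⬝ᵥ ((2 : ℂ) • (R *ᵥ x) - (2 : ℂ) • q)).re
      + t ^ 2 * (star p ⬝ᵥ R *ᵥ p).re := by
  have hRsym : (star x ⬝ᵥ R *ᵥ p).re = (star p ⬝ᵥ R *ᵥ x).re :=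
    hR.re_star_dotProduct_mulVec_comm x p
  have hqsym : (star q ⬝ᵥ p).re = (star p ⬝ᵥ q).re := re_star_dotProduct_comm q p
  simp only [fbar, star_add, star_smul, mulVec_add, mulVec_smul, dotProduct_add, add_dotProduct,
    smul_dotProduct, dotProduct_smul, dotProduct_sub, smul_eq_mul, Complex.star_def,
    Complex.conj_ofReal, Complex.add_re, Complex.sub_re, Complex.re_ofReal_mul]
  simp only [Complex.mul_re, Complex.re_ofNat, Complex.im_ofNat, zero_mul, sub_zero]
  rw [hRsym, hqsym]
  ring

theorem re_conj_proj_coord_mul_self (a z : ℂ) (hz : ‖z‖ = 1) :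
    (starRingEnd ℂ (a - ((starRingEnd ℂ a * z).re : ℂ) * z) * a).re
      = Complex.normSq (a - ((starRingEnd ℂ a * z).re : ℂ) * z) := by
  -- `a` is the projection plus a real multiple of `z`, and the projection is orthogonal to `z`
  -- for the real inner product `Re(conj u · v)` because `|z| = 1`.
  have h : z.re * z.re + z.im * z.im = 1 := by
    rw [← Complex.normSq_apply, Complex.normSq_eq_norm_sq, hz, one_pow]
  simp only [Complex.normSq_apply, map_sub, _root_.map_mul, Complex.conj_re, Complex.conj_im,
    Complex.mul_re, Complex.mul_im, Complex.sub_re, Complex.sub_im, Complex.ofReal_re,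
    Complex.ofReal_im, Complex.conj_ofReal]
  linear_combination -(a.re * z.re + a.im * z.im) ^ 2 * h

theorem re_star_proj_dotProduct {L : ℕ} {z : Fin L → ℂ} (hz : ∀ l, ‖z l‖ = 1) (v : Fin L → ℂ) :
    (star (proj z v) ⬝ᵥ v).re = (star (proj z v) ⬝ᵥ proj z v).re := by
  simp only [dotProduct, proj, Complex.re_sum, Pi.star_apply, Complex.star_def]
  refine Finset.sum_congr rfl fun l _ => ?_
  rw [re_conj_proj_coord_mul_self _ _ (hz l), ← Complex.normSq_eq_conj_mul_self,
    Complex.ofReal_re]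

theorem stmt6_general (L : ℕ) (P : Matrix (Fin L) (Fin L) ℂ)
    (q : Fin L → ℂ) (γ : ℝ)
    (hHerm : (P + (γ : ℂ) • (1 : Matrix (Fin L) (Fin L) ℂ)).IsHermitian)
    (lam : ℝ)
    (hlam_ub : ∀ i, hHerm.eigenvalues i ≤ lam) (hlam_pos : 0 < lam)
    (β : ℝ) (hβ : 0 < β) (hβ' : β < 1 / lam)
    (x : Fin L → ℂ) (hx : ∀ l, ‖x l‖ = 1)
    (w : Fin L → ℂ)
    (hw : w = fun l =>
      2 * (P + (γ : ℂ) • (1 : Matrix (Fin L) (Fin L) ℂ)).mulVec x l - 2 * q l)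
    (xb : Fin L → ℂ)
    (hxb : ∀ l, xb l = x l + (β : ℂ) * proj x (-w) l) :
    fbar (P + (γ : ℂ) • (1 : Matrix (Fin L) (Fin L) ℂ)) q xb
      ≤ fbar (P + (γ : ℂ) • (1 : Matrix (Fin L) (Fin L) ℂ)) q x := by
  set R := P + (γ : ℂ) • (1 : Matrix (Fin L) (Fin L) ℂ)
  obtain rfl : xb = x + (β : ℂ) • proj x (-w) := funext hxb
  obtain rfl : w = (2 : ℂ) • (R *ᵥ x) - (2 : ℂ) • q := hw
  set p := proj x (-((2 : ℂ) • (R *ᵥ x) - (2 : ℂ) • q))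
  have hdescent : (star p ⬝ᵥ ((2 : ℂ) • (R *ᵥ x) - (2 : ℂ) • q)).re = -(star p ⬝ᵥ p).re := by
    rw [← re_star_proj_dotProduct hx, dotProduct_neg, Complex.neg_re, neg_neg]
  have hrayleigh : (star p ⬝ᵥ R *ᵥ p).re ≤ lam * (star p ⬝ᵥ p).re :=
    hHerm.re_dotProduct_mulVec_le hlam_ub p
  have hnorm : 0 ≤ (star p ⬝ᵥ p).re := (Complex.nonneg_iff.mp (dotProduct_star_self_nonneg p)).1
  have hstep : β * lam < 1 := (lt_div_iff₀ hlam_pos).mp hβ'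
  rw [fbar_add_smul hHerm, hdescent]
  calc _ ≤ fbar R q x + β * -(star p ⬝ᵥ p).re + β ^ 2 * (lam * (star p ⬝ᵥ p).re) := by gcongr
    _ = fbar R q x - β * (1 - β * lam) * (star p ⬝ᵥ p).re := by ring
    _ ≤ fbar R q x := by
      have := mul_nonneg (mul_nonneg hβ.le (sub_nonneg.2 hstep.le)) hnorm
      linarith

/-- Lemma 1: With `P` Hermitian PSD, `γ ≥ 0`,
`f̄(y) = Re(y†(P+γI)y − q†y − y†q)`, `x ∈ S^L`, `w(x) = 2(P+γI)x − 2q`,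
`x̄ = x + β·P_x(−w(x))`, and `λ` the largest eigenvalue of `P + γI`, `λ > 0`:
if `0 < β < 1/λ` then `f̄(x) ≥ f̄(x̄)`. -/
theorem stmt6 (L : ℕ) (hL : 0 < L) (P : Matrix (Fin L) (Fin L) ℂ)
    (hP : P.PosSemidef) (q : Fin L → ℂ) (γ : ℝ) (hγ : 0 ≤ γ)
    (hHerm : (P + (γ : ℂ) • (1 : Matrix (Fin L) (Fin L) ℂ)).IsHermitian)
    (lam : ℝ) (hlam_mem : ∃ i, hHerm.eigenvalues i = lam)
    (hlam_ub : ∀ i, hHerm.eigenvalues i ≤ lam) (hlam_pos : 0 < lam)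
    (β : ℝ) (hβ : 0 < β) (hβ' : β < 1 / lam)
    (x : Fin L → ℂ) (hx : ∀ l, ‖x l‖ = 1)
    (w : Fin L → ℂ)
    (hw : w = fun l =>
      2 * (P + (γ : ℂ) • (1 : Matrix (Fin L) (Fin L) ℂ)).mulVec x l - 2 * q l)
    (xb : Fin L → ℂ)
    (hxb : ∀ l, xb l = x l + (β : ℂ) * proj x (-w) l) :
    fbar (P + (γ : ℂ) • (1 : Matrix (Fin L) (Fin L) ℂ)) q xb
      ≤ fbar (P + (γ : ℂ) • (1 : Matrix (Fin L) (Fin L) ℂ)) q x :=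
  stmt6_general L P q γ hHerm lam hlam_ub hlam_pos β hβ hβ' x hx w hw xb hxb
end

section
/- Let L be a positive integer and let P, Ψ ∈ ℂ^{L×L} be Hermitian positive semidefinite matrices with largest eigenvalues λ_P and λ_Ψ respectively. Then for every x ∈ ℂ^L with |x_l| = 1 for all l, Re(x†(ΨP + PΨ)x) ≥ −(L/4)·λ_Ψ·λ_P. -/
open Matrix
open scoped ComplexOrder
open RCLike (re)
open WithLp (toLp)
open scoped InnerProductSpace

/-! Write `u = Ψx`, `v = Px`. The spectrum of `Ψ` lies in `[0, λ_Ψ]`, so `Ψ² ≤ λ_Ψ Ψ`, i.e.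
`‖u‖² ≤ λ_Ψ Re⟨x, u⟩`: `u` lies in the ball of radius `λ_Ψ‖x‖/2` about `λ_Ψ x/2`, and likewise
for `v`. Expanding `0 ≤ ‖λ_P u + λ_Ψ v - (λ_Ψ λ_P/2) x‖²` with these two bounds gives
`Re⟨u, v⟩ ≥ -(λ_Ψ λ_P/8)‖x‖²`, while `Re(x†(ΨP + PΨ)x) = 2 Re⟨u, v⟩` and `‖x‖² = L`. -/

theorem neg_mul_div_eight_le_re_inner {𝕜 E : Type*} [RCLike 𝕜] [NormedAddCommGroup E]
    [InnerProductSpace 𝕜 E] {a b : ℝ} (ha : 0 ≤ a) (hb : 0 ≤ b) {x u v : E}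
    (hu : ‖u‖ ^ 2 ≤ a * re ⟪x, u⟫_𝕜) (hv : ‖v‖ ^ 2 ≤ b * re ⟪x, v⟫_𝕜) :
    -(a * b / 8 * ‖x‖ ^ 2) ≤ re ⟪u, v⟫_𝕜 := by
  rcases ha.eq_or_lt with rfl | ha
  · obtain rfl : u = 0 := by simpa using hu
    simp
  rcases hb.eq_or_lt with rfl | hb
  · obtain rfl : v = 0 := by simpa using hv
    simp
  have hsq := sq_nonneg ‖(b : 𝕜) • u + (a : 𝕜) • v - ((a * b / 2 : ℝ) : 𝕜) • x‖
  rw [@norm_sub_sq 𝕜, @norm_add_sq 𝕜] at hsq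
  simp only [inner_add_left, inner_smul_real_left, inner_smul_real_right, map_add, norm_smul,
    RCLike.smul_re, RCLike.norm_ofReal, abs_of_pos ha, abs_of_pos hb,
    abs_of_pos (by positivity : 0 < a * b / 2), inner_re_symm (𝕜 := 𝕜) u x,
    inner_re_symm (𝕜 := 𝕜) v x] at hsq
  have hab : 0 ≤ a * b * (re ⟪u, v⟫_𝕜 + a * b / 8 * ‖x‖ ^ 2) := by
    nlinarith [mul_le_mul_of_nonneg_left hu (sq_nonneg b),
      mul_le_mul_of_nonneg_left hv (sq_nonneg a)]
  linarith [nonneg_of_mul_nonneg_right hab (by positivity)]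

namespace Matrix

variable {n 𝕜 : Type*} [Fintype n] [RCLike 𝕜] {A B : Matrix n n 𝕜}

theorem IsHermitian.star_dotProduct_mulVec (hA : A.IsHermitian) (x y : n → 𝕜) :
    star x ⬝ᵥ A *ᵥ y = ⟪toLp 2 (A *ᵥ x), toLp 2 y⟫_𝕜 := by
  rw [EuclideanSpace.inner_toLp_toLp, dotProduct_comm y, star_mulVec, hA.eq, dotProduct_mulVec]

theorem IsHermitian.re_star_dotProduct_mul_add_mul_mulVec (hA : A.IsHermitian)
    (hB : B.IsHermitian) (x : n → 𝕜) :
    re (star x ⬝ᵥ (A * B + B * A) *ᵥ x) =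
      2 * re ⟪toLp 2 (A *ᵥ x), toLp 2 (B *ᵥ x)⟫_𝕜 := by
  rw [add_mulVec, ← mulVec_mulVec, ← mulVec_mulVec, dotProduct_add, hA.star_dotProduct_mulVec,
    hB.star_dotProduct_mulVec, map_add, inner_re_symm (𝕜 := 𝕜) (toLp 2 (B *ᵥ x))]
  ring

variable [DecidableEq n]

open scoped MatrixOrder in
theorem PosSemidef.posSemidef_smul_sub_mul_self (hA : A.PosSemidef) {c : ℝ}
    (hc : ∀ i, hA.isHermitian.eigenvalues i ≤ c) : (c • A - A * A).PosSemidef := by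
  rw [← nonneg_iff_posSemidef]
  have hA' : IsSelfAdjoint A := hA.isHermitian
  have hcfc : c • A - A * A = cfc (fun t : ℝ => c * t - t * t) A := by
    rw [cfc_sub _ _ A, cfc_const_mul c _ A, cfc_mul _ _ A, cfc_id' ℝ A]
  rw [hcfc]
  refine cfc_nonneg fun t ht => ?_
  rw [hA.isHermitian.spectrum_real_eq_range_eigenvalues] at ht
  obtain ⟨i, rfl⟩ := ht
  nlinarith [hA.eigenvalues_nonneg i, hc i]

theorem PosSemidef.norm_toLp_mulVec_sq_le (hA : A.PosSemidef) {c : ℝ}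
    (hc : ∀ i, hA.isHermitian.eigenvalues i ≤ c) (x : n → 𝕜) :
    ‖toLp 2 (A *ᵥ x)‖ ^ 2 ≤ c * re ⟪toLp 2 x, toLp 2 (A *ᵥ x)⟫_𝕜 := by
  have h := (hA.posSemidef_smul_sub_mul_self hc).re_dotProduct_nonneg x
  rw [sub_mulVec, smul_mulVec, ← mulVec_mulVec, dotProduct_sub, dotProduct_smul, map_sub,
    hA.isHermitian.star_dotProduct_mulVec, hA.isHermitian.star_dotProduct_mulVec, RCLike.smul_re,
    inner_self_eq_norm_sq, inner_re_symm] at h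
  linarith

end Matrix

theorem stmt8_general (L : ℕ)
    (P Ψ : Matrix (Fin L) (Fin L) ℂ) (hP : P.PosSemidef) (hΨ : Ψ.PosSemidef)
    (lamP lamPsi : ℝ)
    (hlamP_mem : ∃ i, hP.isHermitian.eigenvalues i = lamP)
    (hlamP_ub : ∀ i, hP.isHermitian.eigenvalues i ≤ lamP)
    (hlamPsi_mem : ∃ i, hΨ.isHermitian.eigenvalues i = lamPsi)
    (hlamPsi_ub : ∀ i, hΨ.isHermitian.eigenvalues i ≤ lamPsi)
    (x : Fin L → ℂ) (hx : ∀ l, ‖x l‖ = 1) :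
    -((L : ℝ) / 4) * lamPsi * lamP ≤ (star x ⬝ᵥ (Ψ * P + P * Ψ).mulVec x).re := by
  obtain ⟨i, rfl⟩ := hlamP_mem
  obtain ⟨j, rfl⟩ := hlamPsi_mem
  have hnorm : ‖toLp 2 x‖ ^ 2 = L := by simp [EuclideanSpace.norm_sq_eq, hx]
  have hbound := neg_mul_div_eight_le_re_inner (hΨ.eigenvalues_nonneg j) (hP.eigenvalues_nonneg i)
    (hΨ.norm_toLp_mulVec_sq_le hlamPsi_ub x) (hP.norm_toLp_mulVec_sq_le hlamP_ub x)
  have hform := hΨ.isHermitian.re_star_dotProduct_mul_add_mul_mulVec hP.isHermitian x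
  rw [hnorm] at hbound
  simp only [RCLike.re_to_complex] at hform hbound
  linarith

/-- If `P, Ψ` are Hermitian PSD with largest eigenvalues
`lamP, lamPsi`, then for every unimodular `x ∈ ℂ^L`,
`Re(x†(ΨP + PΨ)x) ≥ −(L/4)·lamPsi·lamP`. -/
theorem stmt8 (L : ℕ) (hL : 0 < L)
    (P Ψ : Matrix (Fin L) (Fin L) ℂ) (hP : P.PosSemidef) (hΨ : Ψ.PosSemidef)
    (lamP lamPsi : ℝ)
    (hlamP_mem : ∃ i, hP.isHermitian.eigenvalues i = lamP)
    (hlamP_ub : ∀ i, hP.isHermitian.eigenvalues i ≤ lamP)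
    (hlamPsi_mem : ∃ i, hΨ.isHermitian.eigenvalues i = lamPsi)
    (hlamPsi_ub : ∀ i, hΨ.isHermitian.eigenvalues i ≤ lamPsi)
    (x : Fin L → ℂ) (hx : ∀ l, ‖x l‖ = 1) :
    -((L : ℝ) / 4) * lamPsi * lamP ≤ (star x ⬝ᵥ (Ψ * P + P * Ψ).mulVec x).re :=
  stmt8_general L P Ψ hP hΨ lamP lamPsi hlamP_mem hlamP_ub hlamPsi_mem hlamPsi_ub x hx
end

section
/- Let L be a positive integer, let P ∈ ℂ^{L×L} be Hermitian positive semidefinite with largest eigenvalue λ_P, let q ∈ ℂ^L, let γ ≥ 0, and define f̄(y) = Re(y†(P + γI)y − q†y − y†q). Let u ∈ S^L, let Ψ be the L×L real diagonal matrix with nonnegative diagonal entries ψ_1,…,ψ_L, and set x̄ = (I + Ψ)u. Then f̄(x̄) − f̄(u) ≥ (2γ − (L/4)·λ_P − 2·‖q‖₂)·Σ_l ψ_l. -/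
/-!
Write `x̄ = u + v` with `v = Ψ u` and `R = P + γ I`. As `R` is Hermitian,
`f̄(u + v) - f̄(u) = v† R v + 2 Re v† R u - 2 Re v† q`, and `v† R v ≥ 0`.
Coordinatewise, `Re v† R u = Σ ψ_l (γ + Re ū_l (P u)_l)` and `Re v† q ≤ ‖q‖₂ Σ ψ_l`.
The bound `Re ū_l (P u)_l ≥ -L λ_P / 8` is polarization: for `a = 2 u_l e_l`,
`4 Re a† P u = (u + a)† P (u + a) - (u - a)† P (u - a) ≥ 0 - λ_P ‖u - a‖²`,
and `u - a` is `u` with its `l`-th entry negated, so `‖u - a‖² = L`.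
-/

open Matrix
open scoped ComplexOrder

section
variable {n : Type*} [Fintype n]

open scoped MatrixOrder in
theorem Matrix.IsHermitian.re_dotProduct_mulVec_le_s10 [DecidableEq n] {A : Matrix n n ℂ}
    (hA : A.IsHermitian) {c : ℝ} (hc : ∀ i, hA.eigenvalues i ≤ c) (x : n → ℂ) :
    (star x ⬝ᵥ A *ᵥ x).re ≤ c * (star x ⬝ᵥ x).re := by
  have hle : A ≤ algebraMap ℝ (Matrix n n ℂ) c := by
    refine le_algebraMap_of_spectrum_le ?_ hA.isSelfAdjoint
    rw [hA.spectrum_real_eq_range_eigenvalues]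
    rintro _ ⟨i, rfl⟩
    exact hc i
  have h := (Complex.le_def.mp (hle.dotProduct_mulVec_nonneg x)).1
  simpa [Algebra.algebraMap_eq_smul_one, sub_mulVec, smul_mulVec, dotProduct_smul] using h

theorem Matrix.IsHermitian.re_dotProduct_mulVec_comm {A : Matrix n n ℂ}
    (hA : A.IsHermitian) (x y : n → ℂ) :
    (star y ⬝ᵥ A *ᵥ x).re = (star x ⬝ᵥ A *ᵥ y).re := by
  rw [star_dotProduct, star_mulVec, hA.eq, ← dotProduct_mulVec, Complex.star_def, Complex.conj_re]

theorem Matrix.IsHermitian.re_dotProduct_mulVec_add_sub_sub {A : Matrix n n ℂ}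
    (hA : A.IsHermitian) (x y : n → ℂ) :
    (star (y + x) ⬝ᵥ A *ᵥ (y + x)).re - (star (y - x) ⬝ᵥ A *ᵥ (y - x)).re
      = 4 * (star x ⬝ᵥ A *ᵥ y).re := by
  have hsymm := hA.re_dotProduct_mulVec_comm x y
  simp only [star_add, star_sub, mulVec_add, mulVec_sub, add_dotProduct, sub_dotProduct,
    dotProduct_add, dotProduct_sub, Complex.add_re, Complex.sub_re, hsymm]
  ring

theorem Matrix.PosSemidef.neg_le_re_dotProduct_mulVec [DecidableEq n] {A : Matrix n n ℂ}
    (hA : A.PosSemidef) {c : ℝ} (hc : ∀ i, hA.isHermitian.eigenvalues i ≤ c) (x y : n → ℂ) :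
    -(c / 4 * (star (y - x) ⬝ᵥ (y - x)).re) ≤ (star x ⬝ᵥ A *ᵥ y).re := by
  have hplus : 0 ≤ (star (y + x) ⬝ᵥ A *ᵥ (y + x)).re :=
    (Complex.le_def.mp (hA.dotProduct_mulVec_nonneg (y + x))).1
  have hminus := hA.isHermitian.re_dotProduct_mulVec_le_s10 hc (y - x)
  have := hA.isHermitian.re_dotProduct_mulVec_add_sub_sub x y
  linarith

theorem star_dotProduct_self_of_norm_eq_one {u : n → ℂ} (hu : ∀ i, ‖u i‖ = 1) :
    star u ⬝ᵥ u = Fintype.card n := by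
  simp [dotProduct, Complex.conj_mul', hu]

theorem Matrix.PosSemidef.neg_le_re_star_mul_mulVec_apply [DecidableEq n] {A : Matrix n n ℂ}
    (hA : A.PosSemidef) {c : ℝ} (hc : ∀ i, hA.isHermitian.eigenvalues i ≤ c) {u : n → ℂ}
    (hu : ∀ i, ‖u i‖ = 1) (i : n) :
    -(Fintype.card n / 8 * c) ≤ (star (u i) * (A *ᵥ u) i).re := by
  have hflip : u - Pi.single i (2 * u i) = Function.update u i (-u i) := by
    ext k
    rcases eq_or_ne k i with rfl | hk
    · simp only [Pi.sub_apply, Pi.single_eq_same, Function.update_self]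
      ring
    · simp [hk]
  have hflip_norm : ∀ k, ‖Function.update u i (-u i) k‖ = 1 := by
    intro k
    rcases eq_or_ne k i with rfl | hk
    · simp [hu]
    · simp [hk, hu]
  have h := hA.neg_le_re_dotProduct_mulVec hc (Pi.single i (2 * u i)) u
  rw [hflip, star_dotProduct_self_of_norm_eq_one hflip_norm, ← Pi.single_star,
    single_dotProduct] at h
  rw [star_mul', star_ofNat, mul_assoc, ← Complex.ofReal_ofNat, Complex.re_ofReal_mul,
    Complex.natCast_re] at h
  linarith

theorem re_star_diagonal_mulVec_dotProduct [DecidableEq n] (ψ : n → ℝ) (u z : n → ℂ) :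
    (star (diagonal (fun l => (ψ l : ℂ)) *ᵥ u) ⬝ᵥ z).re = ∑ l, ψ l * (star (u l) * z l).re := by
  simp only [mulVec_diagonal, dotProduct, Complex.re_sum, Pi.star_apply, star_mul',
    Complex.star_def, Complex.conj_ofReal, mul_assoc, Complex.re_ofReal_mul]

theorem Matrix.PosSemidef.le_re_star_mul_add_smul_one_mulVec_apply [DecidableEq n]
    {A : Matrix n n ℂ} (hA : A.PosSemidef) {c : ℝ} (hc : ∀ i, hA.isHermitian.eigenvalues i ≤ c)
    {u : n → ℂ} (hu : ∀ i, ‖u i‖ = 1) (γ : ℝ) (i : n) :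
    γ - Fintype.card n / 8 * c ≤ (star (u i) * ((A + (γ : ℂ) • 1) *ᵥ u) i).re := by
  have h := hA.neg_le_re_star_mul_mulVec_apply hc hu i
  have hui : star (u i) * u i = 1 := by simp [Complex.conj_mul', hu]
  simp only [add_mulVec, smul_mulVec, one_mulVec, Pi.add_apply, Pi.smul_apply, smul_eq_mul,
    mul_add, mul_left_comm _ (γ : ℂ), hui, mul_one, Complex.add_re, Complex.ofReal_re]
  linarith

end

theorem Matrix.IsHermitian.fbar_add_sub_fbar {L : ℕ} {R : Matrix (Fin L) (Fin L) ℂ}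
    (hR : R.IsHermitian) (q u v : Fin L → ℂ) :
    fbar R q (u + v) - fbar R q u
      = (star v ⬝ᵥ R *ᵥ v).re + 2 * (star v ⬝ᵥ R *ᵥ u).re - 2 * (star v ⬝ᵥ q).re := by
  have hRsymm : (star u ⬝ᵥ R *ᵥ v).re = (star v ⬝ᵥ R *ᵥ u).re := hR.re_dotProduct_mulVec_comm v u
  have hqsymm : (star q ⬝ᵥ v).re = (star v ⬝ᵥ q).re := by
    rw [star_dotProduct, Complex.star_def, Complex.conj_re]
  simp only [fbar, star_add, mulVec_add, add_dotProduct, dotProduct_add, Complex.add_re,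
    Complex.sub_re, hRsymm, hqsymm]
  ring

theorem stmt10_general (L : ℕ) (P : Matrix (Fin L) (Fin L) ℂ)
    (hP : P.PosSemidef)
    (lamP : ℝ)
    (hlamP_ub : ∀ i, hP.isHermitian.eigenvalues i ≤ lamP)
    (q : Fin L → ℂ) (γ : ℝ) (hγ : 0 ≤ γ)
    (u : Fin L → ℂ) (hu : ∀ l, ‖u l‖ = 1)
    (ψ : Fin L → ℝ) (hψ : ∀ l, 0 ≤ ψ l)
    (Ψ : Matrix (Fin L) (Fin L) ℂ)
    (hΨ : Ψ = Matrix.diagonal fun l => ((ψ l : ℝ) : ℂ))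
    (xb : Fin L → ℂ)
    (hxb : xb = ((1 : Matrix (Fin L) (Fin L) ℂ) + Ψ).mulVec u) :
    (2 * γ - ((L : ℝ) / 4) * lamP
        - 2 * Real.sqrt (∑ l, ‖q l‖ ^ 2)) * (∑ l, ψ l)
      ≤ fbar (P + (γ : ℂ) • (1 : Matrix (Fin L) (Fin L) ℂ)) q xb
        - fbar (P + (γ : ℂ) • (1 : Matrix (Fin L) (Fin L) ℂ)) q u := by
  subst hΨ hxb
  set R := P + (γ : ℂ) • (1 : Matrix (Fin L) (Fin L) ℂ)
  set v := diagonal (fun l => (ψ l : ℂ)) *ᵥ u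
  have hR : R.PosSemidef := hP.add (PosSemidef.one.smul (Complex.zero_le_real.mpr hγ))
  have hqu : ∀ l, (star (u l) * q l).re ≤ Real.sqrt (∑ l, ‖q l‖ ^ 2) := fun l => by
    refine (Complex.re_le_norm _).trans ?_
    rw [norm_mul, norm_star, hu l, one_mul]
    exact Real.le_sqrt_of_sq_le
      (Finset.single_le_sum (fun k _ => sq_nonneg ‖q k‖) (Finset.mem_univ l))
  have hvRv : 0 ≤ (star v ⬝ᵥ R *ᵥ v).re := (Complex.le_def.mp (hR.dotProduct_mulVec_nonneg v)).1
  rw [add_mulVec, one_mulVec, hR.isHermitian.fbar_add_sub_fbar,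
    re_star_diagonal_mulVec_dotProduct _ _ (R *ᵥ u), re_star_diagonal_mulVec_dotProduct _ _ q]
  have hRv : ∑ l, ψ l * (γ - L / 8 * lamP) ≤ ∑ l, ψ l * (star (u l) * (R *ᵥ u) l).re :=
    Finset.sum_le_sum fun l _ => mul_le_mul_of_nonneg_left (by
      simpa only [Fintype.card_fin] using
        hP.le_re_star_mul_add_smul_one_mulVec_apply hlamP_ub hu γ l) (hψ l)
  have hqv : ∑ l, ψ l * (star (u l) * q l).re ≤ ∑ l, ψ l * Real.sqrt (∑ l, ‖q l‖ ^ 2) :=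
    Finset.sum_le_sum fun l _ => mul_le_mul_of_nonneg_left (hqu l) (hψ l)
  rw [← Finset.sum_mul] at hRv hqv
  linarith

/-- With `P` Hermitian PSD of largest eigenvalue `lamP`, `γ ≥ 0`,
`u ∈ S^L`, `Ψ` real diagonal with nonnegative entries `ψ_l`, and `x̄ = (I + Ψ)u`:
`f̄(x̄) − f̄(u) ≥ (2γ − (L/4)·lamP − 2‖q‖₂)·Σ_l ψ_l`. -/
theorem stmt10 (L : ℕ) (hL : 0 < L) (P : Matrix (Fin L) (Fin L) ℂ)
    (hP : P.PosSemidef)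
    (lamP : ℝ) (hlamP_mem : ∃ i, hP.isHermitian.eigenvalues i = lamP)
    (hlamP_ub : ∀ i, hP.isHermitian.eigenvalues i ≤ lamP)
    (q : Fin L → ℂ) (γ : ℝ) (hγ : 0 ≤ γ)
    (u : Fin L → ℂ) (hu : ∀ l, ‖u l‖ = 1)
    (ψ : Fin L → ℝ) (hψ : ∀ l, 0 ≤ ψ l)
    (Ψ : Matrix (Fin L) (Fin L) ℂ)
    (hΨ : Ψ = Matrix.diagonal fun l => ((ψ l : ℝ) : ℂ))
    (xb : Fin L → ℂ)
    (hxb : xb = ((1 : Matrix (Fin L) (Fin L) ℂ) + Ψ).mulVec u) :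
    (2 * γ - ((L : ℝ) / 4) * lamP
        - 2 * Real.sqrt (∑ l, ‖q l‖ ^ 2)) * (∑ l, ψ l)
      ≤ fbar (P + (γ : ℂ) • (1 : Matrix (Fin L) (Fin L) ℂ)) q xb
        - fbar (P + (γ : ℂ) • (1 : Matrix (Fin L) (Fin L) ℂ)) q u :=
  stmt10_general L P hP lamP hlamP_ub q γ hγ u hu ψ hψ Ψ hΨ xb hxb
end

section
/- (Lemma 2) Let L be a positive integer, let P ∈ ℂ^{L×L} be Hermitian positive semidefinite with largest eigenvalue λ_P, let q ∈ ℂ^L, and let γ ∈ ℝ satisfy γ ≥ (L/8)·λ_P + ‖q‖₂. Define f̄(y) = Re(y†(P + γI)y − q†y − y†q). Then for every x̄ ∈ ℂ^L with |x̄_l| ≥ 1 for all l (in particular, for any tangent-space update x̄ = x + β·P_x(−w(x)) produced from a point x ∈ S^L), one has f̄(x̄) ≥ f̄(R(x̄)), where (R(x̄))_l = x̄_l/|x̄_l|. -/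
open Matrix
open scoped ComplexOrder

/-- Retraction onto the complex circle manifold: `(R(w))_l = w_l / |w_l|`. -/
noncomputable def retr {L : ℕ} (w : Fin L → ℂ) : Fin L → ℂ :=
  fun l => w l / ((‖w l‖ : ℝ) : ℂ)

/-!
Write `x̄ = r + d` with `r = R(x̄)` and `d_l = (|x̄_l| - 1) r_l`. Then
`f̄(x̄) - f̄(r) = d†(P + γI)d + 2 Re(d†((P + γI) r - q))`. The first term is nonnegative, and the
second is `2 ∑_l (|x̄_l| - 1) Re(r̄_l ((P + γI) r - q)_l)`, where each radial component is at least
`Re(r̄_l (P r)_l) + γ - ‖q‖₂`. This is nonnegative because `8 Re(r̄_l (P r)_l) ≥ -L λ_P`: polarize,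
`4 Re(u†Pv) = (u+v)†P(u+v) - (u-v)†P(u-v) ≥ -λ_P ‖u - v‖²`, with `u = 2 r_l e_l` and `v = r`,
for which `‖u - v‖² = L`.
-/

namespace Matrix

variable {n : Type*} [Fintype n]

lemma re_star_dotProduct_self (x : n → ℂ) : (star x ⬝ᵥ x).re = ∑ i, ‖x i‖ ^ 2 := by
  simp only [dotProduct, Pi.star_apply, Complex.re_sum, Complex.star_def, Complex.conj_mul']
  norm_cast

lemma IsHermitian.re_dotProduct_mulVec_comm_s11 {A : Matrix n n ℂ} (hA : A.IsHermitian)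
    (u v : n → ℂ) : (star u ⬝ᵥ A *ᵥ v).re = (star v ⬝ᵥ A *ᵥ u).re := by
  rw [star_dotProduct, star_mulVec, ← dotProduct_mulVec, hA.eq, Complex.star_def,
    Complex.conj_re]

variable [DecidableEq n]

open scoped MatrixOrder in
lemma IsHermitian.posSemidef_smul_one_sub_s11 {A : Matrix n n ℂ}
    (hA : A.IsHermitian) {c : ℝ} (hc : ∀ i, hA.eigenvalues i ≤ c) :
    (c • (1 : Matrix n n ℂ) - A).PosSemidef := by
  have hle : A ≤ algebraMap ℝ (Matrix n n ℂ) c := by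
    refine le_algebraMap_of_spectrum_le (fun x hx => ?_) hA.isSelfAdjoint
    obtain ⟨i, rfl⟩ := hA.spectrum_real_eq_range_eigenvalues ▸ hx
    exact hc i
  rwa [Algebra.algebraMap_eq_smul_one] at hle

lemma IsHermitian.re_dotProduct_mulVec_le_s11 {A : Matrix n n ℂ} (hA : A.IsHermitian) {c : ℝ}
    (hc : ∀ i, hA.eigenvalues i ≤ c) (x : n → ℂ) :
    (star x ⬝ᵥ A *ᵥ x).re ≤ c * ∑ i, ‖x i‖ ^ 2 := by
  have h := (hA.posSemidef_smul_one_sub_s11 hc).re_dotProduct_nonneg x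
  rw [sub_mulVec, smul_mulVec, one_mulVec, dotProduct_sub, dotProduct_smul] at h
  simpa [re_star_dotProduct_self] using h

lemma PosSemidef.neg_mul_le_four_mul_re_dotProduct_mulVec {A : Matrix n n ℂ}
    (hA : A.PosSemidef) {c : ℝ} (hc : ∀ i, hA.isHermitian.eigenvalues i ≤ c) (u v : n → ℂ) :
    -(c * ∑ i, ‖(u - v) i‖ ^ 2) ≤ 4 * (star u ⬝ᵥ A *ᵥ v).re := by
  have hplus : 0 ≤ (star (u + v) ⬝ᵥ A *ᵥ (u + v)).re := hA.re_dotProduct_nonneg (u + v)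
  have hminus := hA.isHermitian.re_dotProduct_mulVec_le_s11 hc (u - v)
  have hcomm := hA.isHermitian.re_dotProduct_mulVec_comm_s11 u v
  simp only [mulVec_add, mulVec_sub, star_add, star_sub, add_dotProduct, dotProduct_add,
    sub_dotProduct, dotProduct_sub, Complex.add_re, Complex.sub_re] at hplus hminus
  linarith

lemma PosSemidef.neg_card_div_eight_mul_le_re_star_mul_mulVec
    {A : Matrix n n ℂ} (hA : A.PosSemidef) {c : ℝ} (hc : ∀ i, hA.isHermitian.eigenvalues i ≤ c)
    {r : n → ℂ} (hr : ∀ i, ‖r i‖ = 1) (l : n) :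
    -(Fintype.card n / 8 * c) ≤ (star (r l) * (A *ᵥ r) l).re := by
  have h := hA.neg_mul_le_four_mul_re_dotProduct_mulVec hc (Pi.single l (2 * r l)) r
  have hnorm : ∀ i, ‖((Pi.single l (2 * r l) : n → ℂ) - r) i‖ = 1 := by
    intro i
    rcases eq_or_ne i l with rfl | hi
    · simp [two_mul, hr]
    · simp [Pi.single_eq_of_ne hi, hr]
  have hdot :
      (star (Pi.single l (2 * r l)) ⬝ᵥ A *ᵥ r).re = 2 * (star (r l) * (A *ᵥ r) l).re := by
    rw [← Pi.single_star, single_dotProduct, star_mul', star_ofNat, mul_assoc]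
    exact RCLike.ofNat_mul_re (K := ℂ) 2 _
  simp only [hnorm, hdot, one_pow, Finset.sum_const, Finset.card_univ, nsmul_eq_mul, mul_one] at h
  linarith

lemma PosSemidef.re_star_mul_add_smul_one_mulVec_sub_nonneg {A : Matrix n n ℂ}
    (hA : A.PosSemidef) {c : ℝ} (hc : ∀ i, hA.isHermitian.eigenvalues i ≤ c) {q : n → ℂ} {γ : ℝ}
    (hγ : Fintype.card n / 8 * c + √(∑ i, ‖q i‖ ^ 2) ≤ γ) {r : n → ℂ} (hr : ∀ i, ‖r i‖ = 1)
    (l : n) : 0 ≤ (star (r l) * (((A + (γ : ℂ) • 1) *ᵥ r) l - q l)).re := by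
  have hA_diag := hA.neg_card_div_eight_mul_le_re_star_mul_mulVec hc hr l
  have hq : (star (r l) * q l).re ≤ √(∑ i, ‖q i‖ ^ 2) :=
    calc (star (r l) * q l).re ≤ ‖star (r l) * q l‖ := Complex.re_le_norm _
      _ = ‖q l‖ := by rw [norm_mul, norm_star, hr, one_mul]
      _ ≤ √(∑ i, ‖q i‖ ^ 2) := (Real.le_sqrt (norm_nonneg _) (by positivity)).mpr
          (Finset.single_le_sum (fun i _ => sq_nonneg ‖q i‖) (Finset.mem_univ l))
  have hrr : star (r l) * r l = 1 := by
    rw [Complex.star_def, Complex.conj_mul', hr]; norm_num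
  have hsplit : star (r l) * (((A + (γ : ℂ) • 1) *ᵥ r) l - q l)
      = star (r l) * (A *ᵥ r) l + γ - star (r l) * q l := by
    rw [add_mulVec, smul_mulVec, one_mulVec, Pi.add_apply, Pi.smul_apply, smul_eq_mul,
      mul_sub, mul_add, mul_left_comm, hrr, mul_one]
  rw [hsplit, Complex.sub_re, Complex.add_re, Complex.ofReal_re]
  linarith

end Matrix

lemma fbar_add {L : ℕ} {M : Matrix (Fin L) (Fin L) ℂ} (hM : M.IsHermitian) (q r d : Fin L → ℂ) :
    fbar M q (r + d) =
      fbar M q r + (star d ⬝ᵥ M *ᵥ d).re + 2 * (star d ⬝ᵥ (M *ᵥ r - q)).re := by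
  have hM_comm := hM.re_dotProduct_mulVec_comm_s11 r d
  have hq_comm : (star q ⬝ᵥ d).re = (star d ⬝ᵥ q).re := by
    rw [star_dotProduct, Complex.star_def, Complex.conj_re]
  simp only [fbar, mulVec_add, star_add, add_dotProduct, dotProduct_add, dotProduct_sub,
    Complex.add_re, Complex.sub_re] at hM_comm ⊢
  linarith

lemma fbar_le_fbar_add_radial {L : ℕ} {P : Matrix (Fin L) (Fin L) ℂ} (hP : P.PosSemidef) {c : ℝ}
    (hc : ∀ i, hP.isHermitian.eigenvalues i ≤ c) {q : Fin L → ℂ} {γ : ℝ}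
    (hγ : (L : ℝ) / 8 * c + √(∑ l, ‖q l‖ ^ 2) ≤ γ) {r : Fin L → ℂ} (hr : ∀ l, ‖r l‖ = 1)
    {ε : Fin L → ℝ} (hε : ∀ l, 0 ≤ ε l) :
    fbar (P + (γ : ℂ) • 1) q r ≤ fbar (P + (γ : ℂ) • 1) q (r + fun l => (ε l : ℂ) * r l) := by
  set d : Fin L → ℂ := fun l => (ε l : ℂ) * r l
  have hM : (P + (γ : ℂ) • 1).IsHermitian :=
    hP.isHermitian.add (isHermitian_one.smul (Complex.conj_ofReal γ))
  have hquad : 0 ≤ (star d ⬝ᵥ (P + (γ : ℂ) • 1) *ᵥ d).re := by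
    have hPd : 0 ≤ (star d ⬝ᵥ P *ᵥ d).re := hP.re_dotProduct_nonneg d
    have hPd_le := hP.isHermitian.re_dotProduct_mulVec_le_s11 hc d
    have hS : 0 ≤ ∑ l, ‖d l‖ ^ 2 := by positivity
    have hγS : 0 ≤ γ * ∑ l, ‖d l‖ ^ 2 := by
      refine le_trans ?_ (mul_le_mul_of_nonneg_right hγ hS)
      rw [add_mul, mul_assoc]
      exact add_nonneg (mul_nonneg (by positivity) (hPd.trans hPd_le))
        (mul_nonneg (Real.sqrt_nonneg _) hS)
    rw [add_mulVec, smul_mulVec, one_mulVec, dotProduct_add, dotProduct_smul, Complex.add_re,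
      smul_eq_mul, Complex.re_ofReal_mul, re_star_dotProduct_self]
    linarith
  have hlin : 0 ≤ (star d ⬝ᵥ ((P + (γ : ℂ) • 1) *ᵥ r - q)).re := by
    have hγ' : Fintype.card (Fin L) / 8 * c + √(∑ l, ‖q l‖ ^ 2) ≤ γ := by simpa using hγ
    simp only [d, dotProduct, Complex.re_sum, Pi.star_apply, star_mul', Complex.star_def,
      Complex.conj_ofReal, mul_assoc, Complex.re_ofReal_mul]
    exact Finset.sum_nonneg fun l _ =>
      mul_nonneg (hε l) (hP.re_star_mul_add_smul_one_mulVec_sub_nonneg hc hγ' hr l)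
  rw [fbar_add hM]
  linarith

lemma norm_retr_apply {L : ℕ} {w : Fin L → ℂ} {l : Fin L} (h : w l ≠ 0) : ‖retr w l‖ = 1 := by
  simp [retr, h]

lemma retr_add_radial {L : ℕ} (w : Fin L → ℂ) :
    retr w + (fun l => ((‖w l‖ - 1 : ℝ) : ℂ) * retr w l) = w := by
  funext l
  rcases eq_or_ne (w l) 0 with h | h
  · simp [retr, h]
  · simp only [retr, Pi.add_apply, Complex.ofReal_sub, Complex.ofReal_one]
    field_simp
    ring

theorem stmt11_general (L : ℕ) (P : Matrix (Fin L) (Fin L) ℂ)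
    (hP : P.PosSemidef)
    (lamP : ℝ)
    (hlamP_ub : ∀ i, hP.isHermitian.eigenvalues i ≤ lamP)
    (q : Fin L → ℂ) (γ : ℝ)
    (hγ : ((L : ℝ) / 8) * lamP + Real.sqrt (∑ l, ‖q l‖ ^ 2) ≤ γ) :
    ∀ xb : Fin L → ℂ, (∀ l, 1 ≤ ‖xb l‖) →
      fbar (P + (γ : ℂ) • (1 : Matrix (Fin L) (Fin L) ℂ)) q (retr xb)
        ≤ fbar (P + (γ : ℂ) • (1 : Matrix (Fin L) (Fin L) ℂ)) q xb := by
  intro xb hxb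
  have hxb_ne : ∀ l, xb l ≠ 0 := fun l => norm_pos_iff.mp (one_pos.trans_le (hxb l))
  conv_rhs => rw [← retr_add_radial xb]
  exact fbar_le_fbar_add_radial hP hlamP_ub hγ (fun l => norm_retr_apply (hxb_ne l))
    fun l => sub_nonneg.mpr (hxb l)

/-- Lemma 2: With `P` Hermitian PSD of largest eigenvalue `lamP`
and `γ ≥ (L/8)·lamP + ‖q‖₂`, for every `x̄ ∈ ℂ^L` with `|x̄_l| ≥ 1` for all `l`,
`f̄(x̄) ≥ f̄(R(x̄))` where `f̄(y) = Re(y†(P+γI)y − q†y − y†q)` and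
`(R(x̄))_l = x̄_l/|x̄_l|`. -/
theorem stmt11 (L : ℕ) (hL : 0 < L) (P : Matrix (Fin L) (Fin L) ℂ)
    (hP : P.PosSemidef)
    (lamP : ℝ) (hlamP_mem : ∃ i, hP.isHermitian.eigenvalues i = lamP)
    (hlamP_ub : ∀ i, hP.isHermitian.eigenvalues i ≤ lamP)
    (q : Fin L → ℂ) (γ : ℝ)
    (hγ : ((L : ℝ) / 8) * lamP + Real.sqrt (∑ l, ‖q l‖ ^ 2) ≤ γ) :
    ∀ xb : Fin L → ℂ, (∀ l, 1 ≤ ‖xb l‖) →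
      fbar (P + (γ : ℂ) • (1 : Matrix (Fin L) (Fin L) ℂ)) q (retr xb)
        ≤ fbar (P + (γ : ℂ) • (1 : Matrix (Fin L) (Fin L) ℂ)) q xb :=
  stmt11_general L P hP lamP hlamP_ub q γ hγ
end
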